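/- arXiv:2602.14047 — 4 statements merged into one kernel-verified Lean document; each statement's English description precedes it below -/
import Mathlib

section
/- For every d ∈ ℕ there exists a constant C_d with C_d ≤ binomial(2d−2, d−1) such that for all n ∈ ℕ and all homogeneous polynomials p of degree n in d variables, ‖p‖₂ ≤ |||p|||₁ ≤ √C_d · ‖p‖₂. -/
/-!
The lower bound comes from `k = 0`: a factor of degree `0` is a constant, so the triangle
inequality for `‖·‖₂` gives `‖p‖₂ ≤ ‖p‖_{P_{d,0} ⊙ P_{d,n}}`.

For the upper bound, let `T` be a set of multi-indices of degree `k` such that every multi-index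
`α` of degree `n` dominates some `δ ∈ T`. Assigning each monomial `z^α` of `p` to such a `δ`
writes `p = ∑_{δ ∈ T} z^δ g_δ` where the `g_δ` split the coefficients of `p` among themselves,
so Cauchy–Schwarz gives `∑ ‖g_δ‖₂ ≤ √|T| ‖p‖₂`. By the symmetry `k ↔ n - k` we may assume
`2k ≤ n`, and then `T` can be taken of size at most `binom(2d-2, d-1)`: `⌊2(d-1)α/n⌋` has degree
at least `d - 1`, so it dominates some `ε` of degree exactly `d - 1`, and `⌈nε/(2(d-1))⌉ ≤ α`
has degree at least `n/2 ≥ k`; there are `binom(2d-2, d-1)` such `ε`.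
-/

noncomputable section
open scoped ComplexOrder
namespace WP

abbrev MvP (d : ℕ) := MvPolynomial (Fin d) ℂ

/-- The Cauchy pairing `⟨p,q⟩₂ = ∑_α a_α conj(b_α)` of coefficient vectors. -/
def pairing {d : ℕ} (p q : MvP d) : ℂ :=
  ∑ α ∈ p.support, p.coeff α * (starRingEnd ℂ) (q.coeff α)

/-- The Hardy norm `‖p‖₂`: the `ℓ²` norm of the coefficient vector. -/
def norm2 {d : ℕ} (p : MvP d) : ℝ :=
  Real.sqrt (∑ α ∈ p.support, ‖p.coeff α‖ ^ 2)

/-- The weak product norm `‖p‖_{P_{d,k} ⊙ P_{d,l}}`. -/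
def wpNorm (d k l : ℕ) (p : MvP d) : ℝ :=
  sInf {x : ℝ | ∃ (m : ℕ) (f g : Fin m → MvP d),
    (∀ j, (f j).IsHomogeneous k) ∧ (∀ j, (g j).IsHomogeneous l) ∧
    p = ∑ j, f j * g j ∧ x = ∑ j, norm2 (f j) * norm2 (g j)}

/-- The weak product norm `‖p‖_{Z_d ⊙ P_{d,k} ⊙ P_{d,l}}`. -/
def zwpNorm (d k l : ℕ) (p : MvP d) : ℝ :=
  sInf {x : ℝ | ∃ f : Fin d → MvP d,
    (∀ i, (f i).IsHomogeneous (k + l)) ∧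
    p = ∑ i, MvPolynomial.X i * f i ∧ x = ∑ i, wpNorm d k l (f i)}

/-- `|||p|||₁ = max_{0 ≤ k ≤ n} ‖p‖_{P_{d,k} ⊙ P_{d,n-k}}`. -/
def triple1 (d n : ℕ) (p : MvP d) : ℝ :=
  ⨆ k : Fin (n + 1), wpNorm d k (n - k) p

/-- `|||p|||₂ = max_{0 ≤ k ≤ n-1} ‖p‖_{Z_d ⊙ P_{d,k} ⊙ P_{d,n-k-1}}`. -/
def triple2 (d n : ℕ) (p : MvP d) : ℝ :=
  ⨆ k : Fin n, zwpNorm d k (n - 1 - k) p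

open MvPolynomial Finset

section Cover

variable {σ : Type*}

def IsCover (k n : ℕ) (T : Finset (σ →₀ ℕ)) : Prop :=
  (∀ δ ∈ T, δ.degree = k) ∧ ∀ α : σ →₀ ℕ, α.degree = n → ∃ δ ∈ T, δ ≤ α

lemma mem_finsuppAntidiag_univ [Fintype σ] [DecidableEq σ] {k : ℕ} {δ : σ →₀ ℕ} :
    δ ∈ (univ : Finset σ).finsuppAntidiag k ↔ δ.degree = k := by
  simp [Finsupp.degree_eq_sum]

lemma isCover_finsuppAntidiag [Fintype σ] [DecidableEq σ] {k n : ℕ} (hkn : k ≤ n) :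
    IsCover k n ((univ : Finset σ).finsuppAntidiag k) := by
  refine ⟨fun δ hδ => mem_finsuppAntidiag_univ.1 hδ, fun α hα => ?_⟩
  obtain ⟨δ, hδα, hδ⟩ := α.exists_le_degree_eq k (hα ▸ hkn)
  exact ⟨δ, mem_finsuppAntidiag_univ.2 hδ, hδα⟩

lemma degree_smul_lt_degree_floorDiv [Fintype σ] [Nonempty σ] {n : ℕ} (hn : 0 < n) (m : ℕ)
    (α : σ →₀ ℕ) :
    m * α.degree < n * (((m • α) ⌊/⌋ n).degree + Fintype.card σ) := by
  calc m * α.degree = ∑ i, m * α i := by rw [Finsupp.degree_eq_sum, mul_sum]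
    _ < ∑ i, n * (m * α i / n + 1) :=
      sum_lt_sum_of_nonempty univ_nonempty fun i _ => Nat.lt_mul_div_succ _ hn
    _ = n * (((m • α) ⌊/⌋ n).degree + Fintype.card σ) := by
      simp [Finsupp.degree_eq_sum, mul_add, mul_sum, sum_add_distrib, mul_comm]

lemma degree_smul_le_degree_ceilDiv {m : ℕ} (hm : 0 < m) (n : ℕ) (ε : σ →₀ ℕ) :
    n * ε.degree ≤ m * ((n • ε) ⌈/⌉ m).degree := by
  simpa using Finsupp.degree_mono (le_smul_ceilDiv (b := n • ε) hm)

lemma ceilDiv_le_of_le_floorDiv {m n : ℕ} (hm : 0 < m) (hn : 0 < n) {α ε : σ →₀ ℕ}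
    (h : ε ≤ (m • α) ⌊/⌋ n) : (n • ε) ⌈/⌉ m ≤ α :=
  (ceilDiv_le_iff_le_smul hm).2 ((le_floorDiv_iff_smul_le hn).1 h)

end Cover

variable {d : ℕ}

lemma card_finsuppAntidiag_univ_fin (k : ℕ) :
    #((univ : Finset (Fin d)).finsuppAntidiag k) = (d + k - 1).choose k := by
  simp [card_finsuppAntidiag_nat_eq_choose]

lemma exists_isCover_of_two_le {k n : ℕ} (hd : 2 ≤ d) (hn : 0 < n) (hkn : 2 * k ≤ n) :
    ∃ T : Finset (Fin d →₀ ℕ), #T ≤ (2 * d - 2).choose (d - 1) ∧ IsCover k n T := by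
  have : Nonempty (Fin d) := ⟨⟨0, by omega⟩⟩
  set M := 2 * (d - 1) with hM_def
  have hM : 0 < M := by omega
  set S := (univ : Finset (Fin d)).finsuppAntidiag (d - 1)
  have hS : ∀ ε ∈ S, ∃ δ ≤ (n • ε) ⌈/⌉ M, δ.degree = k := fun ε hε => by
    refine Finsupp.exists_le_degree_eq _ k ?_
    have := degree_smul_le_degree_ceilDiv hM n ε
    rw [mem_finsuppAntidiag_univ.1 hε] at this
    refine Nat.le_of_mul_le_mul_left (le_trans ?_ this) hM
    rw [hM_def]
    nlinarith
  choose! F hFle hFdeg using hS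
  refine ⟨S.image F, ?_, ?_, fun α hα => ?_⟩
  · calc #(S.image F) ≤ #S := card_image_le
      _ = _ := by rw [card_finsuppAntidiag_univ_fin]; congr 1; omega
  · simp only [mem_image]
    rintro _ ⟨ε, hε, rfl⟩
    exact hFdeg ε hε
  · have : d - 1 ≤ ((M • α) ⌊/⌋ n).degree := by
      have := degree_smul_lt_degree_floorDiv hn M α
      rw [hα, Fintype.card_fin, mul_comm] at this
      have := Nat.lt_of_mul_lt_mul_left this
      omega
    obtain ⟨ε, hε, hεdeg⟩ := Finsupp.exists_le_degree_eq _ _ this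
    have hεS : ε ∈ S := mem_finsuppAntidiag_univ.2 hεdeg
    exact ⟨F ε, mem_image_of_mem F hεS, (hFle ε hεS).trans (ceilDiv_le_of_le_floorDiv hM hn hε)⟩

lemma exists_isCover_card_le {k n : ℕ} (hkn : 2 * k ≤ n) :
    ∃ T : Finset (Fin d →₀ ℕ), #T ≤ (2 * d - 2).choose (d - 1) ∧ IsCover k n T := by
  by_cases h : d ≤ 1 ∨ k = 0
  · refine ⟨_, ?_, isCover_finsuppAntidiag (σ := Fin d) (by omega)⟩
    rw [card_finsuppAntidiag_univ_fin]
    refine le_trans ?_ (Nat.choose_pos (by omega))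
    rcases h with h | rfl
    · interval_cases d
      · rcases k with _ | k <;> simp
      · simp
    · simp
  · exact exists_isCover_of_two_le (by omega) (by omega) hkn

lemma norm2_nonneg (p : MvP d) : 0 ≤ norm2 p := Real.sqrt_nonneg _

lemma sq_norm2_eq_sum {p : MvP d} {S : Finset (Fin d →₀ ℕ)} (hS : p.support ⊆ S) :
    norm2 p ^ 2 = ∑ α ∈ S, ‖p.coeff α‖ ^ 2 := by
  rw [norm2, Real.sq_sqrt (by positivity)]
  exact sum_subset hS fun α _ hα => by simp [notMem_support_iff.1 hα]

lemma norm2_eq_of_sq_eq {p : MvP d} {x : ℝ} (hx : 0 ≤ x) (h : norm2 p ^ 2 = x ^ 2) :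
    norm2 p = x := by
  nlinarith [norm2_nonneg p]

def coeffVec (S : Finset (Fin d →₀ ℕ)) (p : MvP d) : EuclideanSpace ℂ S :=
  WithLp.toLp 2 fun α => p.coeff α

lemma norm_coeffVec {p : MvP d} {S : Finset (Fin d →₀ ℕ)} (hS : p.support ⊆ S) :
    ‖coeffVec S p‖ = norm2 p := by
  refine (norm2_eq_of_sq_eq (norm_nonneg _) ?_).symm
  rw [sq_norm2_eq_sum hS, EuclideanSpace.norm_eq, Real.sq_sqrt (by positivity), ← sum_coe_sort S]
  rfl

lemma coeffVec_sum {ι : Type*} (S : Finset (Fin d →₀ ℕ)) (s : Finset ι) (f : ι → MvP d) :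
    coeffVec S (∑ i ∈ s, f i) = ∑ i ∈ s, coeffVec S (f i) := by
  ext α
  simp [coeffVec, coeff_sum]

lemma norm2_sum_le {ι : Type*} (s : Finset ι) (f : ι → MvP d) :
    norm2 (∑ i ∈ s, f i) ≤ ∑ i ∈ s, norm2 (f i) := by
  set S := s.biUnion fun i => (f i).support
  have hS : ∀ i ∈ s, (f i).support ⊆ S := fun i hi =>
    subset_biUnion_of_mem (fun i => (f i).support) hi
  calc norm2 (∑ i ∈ s, f i) = ‖∑ i ∈ s, coeffVec S (f i)‖ := by
        rw [← coeffVec_sum, norm_coeffVec (support_sum.trans subset_rfl)]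
    _ ≤ ∑ i ∈ s, ‖coeffVec S (f i)‖ := norm_sum_le _ _
    _ = ∑ i ∈ s, norm2 (f i) := sum_congr rfl fun i hi => norm_coeffVec (hS i hi)

lemma norm2_smul (c : ℂ) (p : MvP d) : norm2 (c • p) = ‖c‖ * norm2 p := by
  rw [← norm_coeffVec support_smul, ← norm_coeffVec subset_rfl, ← norm_smul]
  congr 1

lemma sq_norm2_sum_monomial {ι : Type*} (A : Finset ι) {φ : ι → Fin d →₀ ℕ} (hφ : Set.InjOn φ A)
    (c : ι → ℂ) : norm2 (∑ a ∈ A, monomial (φ a) (c a)) ^ 2 = ∑ a ∈ A, ‖c a‖ ^ 2 := by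
  have hsupp : (∑ a ∈ A, monomial (φ a) (c a)).support ⊆ A.image φ :=
    support_sum.trans <| biUnion_subset.2 fun a ha =>
      support_monomial_subset.trans (singleton_subset_iff.2 (mem_image_of_mem φ ha))
  rw [sq_norm2_eq_sum hsupp, sum_image hφ]
  refine sum_congr rfl fun a ha => ?_
  rw [coeff_sum, sum_eq_single a (fun b hb hba => ?_) (absurd ha), coeff_monomial, if_pos rfl]
  rw [coeff_monomial, if_neg fun h => hba (hφ hb ha h)]

lemma norm2_monomial (δ : Fin d →₀ ℕ) (c : ℂ) : norm2 (monomial δ c) = ‖c‖ :=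
  norm2_eq_of_sq_eq (norm_nonneg c) (by
    simpa using sq_norm2_sum_monomial {()} (φ := fun _ => δ) (by simp) fun _ => c)

lemma wpNorm_le_sum {ι : Type*} {k l : ℕ} {p : MvP d} (s : Finset ι) (f g : ι → MvP d)
    (hf : ∀ i ∈ s, (f i).IsHomogeneous k) (hg : ∀ i ∈ s, (g i).IsHomogeneous l)
    (hp : p = ∑ i ∈ s, f i * g i) :
    wpNorm d k l p ≤ ∑ i ∈ s, norm2 (f i) * norm2 (g i) := by
  have reindex {M : Type} [AddCommMonoid M] (F : ι → M) :
      ∑ j, F (s.equivFin.symm j) = ∑ i ∈ s, F i :=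
    (Equiv.sum_comp s.equivFin.symm (fun i : s => F i)).trans (sum_coe_sort s F)
  refine csInf_le ⟨0, ?_⟩ ⟨#s, fun j => f (s.equivFin.symm j), fun j => g (s.equivFin.symm j),
    fun j => hf _ (s.equivFin.symm j).2, fun j => hg _ (s.equivFin.symm j).2,
    by rw [reindex (fun i => f i * g i), hp], (reindex fun i => norm2 (f i) * norm2 (g i)).symm⟩
  rintro _ ⟨m, f, g, -, -, -, rfl⟩
  exact sum_nonneg fun j _ => mul_nonneg (norm2_nonneg _) (norm2_nonneg _)

lemma wpNorm_comm (k l : ℕ) (p : MvP d) : wpNorm d k l p = wpNorm d l k p := by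
  unfold wpNorm
  congr 1
  ext x
  constructor <;> rintro ⟨m, f, g, hf, hg, hp, hx⟩ <;>
    exact ⟨m, g, f, hg, hf, by simp_rw [hp, mul_comm], by simp_rw [hx, mul_comm]⟩

lemma norm2_le_wpNorm_zero {n : ℕ} {p : MvP d} (hp : p.IsHomogeneous n) :
    norm2 p ≤ wpNorm d 0 n p := by
  refine le_csInf ⟨_, 1, fun _ => 1, fun _ => p, fun _ => isHomogeneous_one _ _, fun _ => hp,
    by simp, rfl⟩ ?_
  rintro _ ⟨m, f, g, hf, -, rfl, rfl⟩
  refine (norm2_sum_le _ _).trans_eq (sum_congr rfl fun j _ => ?_)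
  rw [totalDegree_eq_zero_iff_eq_C.1 ((totalDegree_zero_iff_isHomogeneous _).2 (hf j)), C_mul',
    norm2_smul, C_apply, norm2_monomial]

section DivMonomial

def divMonomialOn (p : MvP d) (A : Finset (Fin d →₀ ℕ)) (δ : Fin d →₀ ℕ) : MvP d :=
  ∑ α ∈ A, monomial (α - δ) (p.coeff α)

variable {p : MvP d} {A : Finset (Fin d →₀ ℕ)} {δ : Fin d →₀ ℕ}

lemma degree_eq_of_mem_support {n : ℕ} (hp : p.IsHomogeneous n) {α : Fin d →₀ ℕ}
    (hα : α ∈ p.support) : α.degree = n :=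
  (hp.degree_eq_sum_deg_support hα).symm

lemma monomial_mul_divMonomialOn (hA : ∀ α ∈ A, δ ≤ α) :
    monomial δ 1 * divMonomialOn p A δ = ∑ α ∈ A, monomial α (p.coeff α) := by
  rw [divMonomialOn, mul_sum]
  exact sum_congr rfl fun α hα => by rw [monomial_mul, one_mul, add_tsub_cancel_of_le (hA α hα)]

lemma sq_norm2_divMonomialOn (hA : ∀ α ∈ A, δ ≤ α) :
    norm2 (divMonomialOn p A δ) ^ 2 = ∑ α ∈ A, ‖p.coeff α‖ ^ 2 :=
  sq_norm2_sum_monomial A (fun α hα β hβ h => (tsub_left_inj (hA α hα) (hA β hβ)).1 h) _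

lemma isHomogeneous_divMonomialOn {k l : ℕ} (hp : p.IsHomogeneous (k + l)) (hAp : A ⊆ p.support)
    (hδ : δ.degree = k) (hA : ∀ α ∈ A, δ ≤ α) : (divMonomialOn p A δ).IsHomogeneous l :=
  IsHomogeneous.sum _ _ _ fun α hα => isHomogeneous_monomial _ <| by
    have := map_add Finsupp.degree δ (α - δ)
    rw [add_tsub_cancel_of_le (hA α hα), degree_eq_of_mem_support hp (hAp hα), hδ] at this
    omega

end DivMonomial

lemma wpNorm_le_sqrt_card_mul_norm2 {k l : ℕ} {p : MvP d} (hp : p.IsHomogeneous (k + l))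
    {T : Finset (Fin d →₀ ℕ)} (hT : IsCover k (k + l) T) :
    wpNorm d k l p ≤ √(#T : ℝ) * norm2 p := by
  have hcov : ∀ α ∈ p.support, ∃ δ ∈ T, δ ≤ α := fun α hα =>
    hT.2 α (degree_eq_of_mem_support hp hα)
  choose! δmap hδT hδle using hcov
  set A := fun δ => {α ∈ p.support | δmap α = δ}
  have hA : ∀ δ, ∀ α ∈ A δ, δ ≤ α := fun δ α hα => by
    obtain ⟨hαp, rfl⟩ := mem_filter.1 hα
    exact hδle α hαp
  set g := fun δ => divMonomialOn p (A δ) δ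
  have hdecomp : p = ∑ δ ∈ T, monomial δ 1 * g δ := by
    simp_rw [g, monomial_mul_divMonomialOn (hA _)]
    rw [sum_fiberwise_of_maps_to hδT]
    exact as_sum p
  have hg : ∑ δ ∈ T, norm2 (g δ) ^ 2 = norm2 p ^ 2 := by
    simp_rw [g, sq_norm2_divMonomialOn (hA _)]
    rw [sum_fiberwise_of_maps_to hδT, sq_norm2_eq_sum subset_rfl]
  calc wpNorm d k l p ≤ ∑ δ ∈ T, norm2 (monomial δ (1 : ℂ)) * norm2 (g δ) :=
        wpNorm_le_sum T _ _ (fun δ hδ => isHomogeneous_monomial _ (hT.1 δ hδ))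
          (fun δ hδ => isHomogeneous_divMonomialOn hp (filter_subset _ _) (hT.1 δ hδ) (hA δ))
          hdecomp
    _ = ∑ δ ∈ T, 1 * norm2 (g δ) := by simp [norm2_monomial]
    _ ≤ √(∑ δ ∈ T, 1 ^ 2) * √(∑ δ ∈ T, norm2 (g δ) ^ 2) := Real.sum_mul_le_sqrt_mul_sqrt _ _ _
    _ = √(#T : ℝ) * norm2 p := by rw [hg, Real.sqrt_sq (norm2_nonneg p)]; simp

lemma wpNorm_le_sqrt_choose_mul_norm2 {k n : ℕ} {p : MvP d} (hp : p.IsHomogeneous n)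
    (hkn : k ≤ n) : wpNorm d k (n - k) p ≤ √((2 * d - 2).choose (d - 1)) * norm2 p := by
  wlog h2k : 2 * k ≤ n generalizing k
  · have := this (Nat.sub_le n k) (by omega)
    rwa [Nat.sub_sub_self hkn, wpNorm_comm] at this
  obtain ⟨T, hTcard, hT⟩ := exists_isCover_card_le (d := d) h2k
  rw [← Nat.add_sub_cancel' hkn] at hp hT
  refine (wpNorm_le_sqrt_card_mul_norm2 hp hT).trans ?_
  exact mul_le_mul_of_nonneg_right (Real.sqrt_le_sqrt (mod_cast hTcard)) (norm2_nonneg p)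

theorem norm2_le_triple1_le_sqrt_Cd_norm2_general (d : ℕ) :
    ∃ C : ℝ, 0 ≤ C ∧ C ≤ (Nat.choose (2 * d - 2) (d - 1) : ℝ) ∧
      ∀ (n : ℕ) (p : MvP d), p.IsHomogeneous n →
        norm2 p ≤ triple1 d n p ∧ triple1 d n p ≤ Real.sqrt C * norm2 p := by
  refine ⟨_, Nat.cast_nonneg _, le_rfl, fun n p hp => ⟨?_, ?_⟩⟩
  · calc norm2 p ≤ wpNorm d (0 : Fin (n + 1)) (n - (0 : Fin (n + 1))) p := by
          simpa using norm2_le_wpNorm_zero hp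
      _ ≤ triple1 d n p :=
          le_ciSup (f := fun k : Fin (n + 1) => wpNorm d k (n - k) p) (Finite.bddAbove_range _) 0
  · exact ciSup_le fun k => wpNorm_le_sqrt_choose_mul_norm2 hp (Nat.lt_succ_iff.mp k.isLt)

/-- Theorem 1.5 / Theorem 6.1 (first part): `|||·|||₁` is equivalent to the Hardy
norm, with constant `C_d ≤ binom(2d-2, d-1)`. -/
theorem norm2_le_triple1_le_sqrt_Cd_norm2 (d : ℕ) (hd : 1 ≤ d) :
    ∃ C : ℝ, 0 ≤ C ∧ C ≤ (Nat.choose (2 * d - 2) (d - 1) : ℝ) ∧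
      ∀ (n : ℕ) (p : MvP d), p.IsHomogeneous n →
        norm2 p ≤ triple1 d n p ∧ triple1 d n p ≤ Real.sqrt C * norm2 p :=
  norm2_le_triple1_le_sqrt_Cd_norm2_general d

end WP
end
end

section
/- Let H be a Hilbert space, let 𝓛 ⊆ B(H) be a convex cone of positive operators containing the identity, let ξ ∈ H, and for g ∈ H define ‖g‖_* = inf{⟨Lξ,ξ⟩^{1/2} : L ∈ 𝓛, L ≥ g⊗g}. Then: (a) ‖·‖_* is a semi-norm on H; (b) for all f ∈ H, sup{|⟨f,g⟩| : g ∈ H, ‖g‖_* ≤ 1} = sup{⟨Lf,f⟩^{1/2} : L ∈ 𝓛, ⟨Lξ,ξ⟩ ≤ 1}. -/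
/-!
If `g ⊗ g ≤ L`, then `(c g) ⊗ (c g) ≤ ‖c‖² L`, and if moreover `h ⊗ h ≤ M`, then
`(g + h) ⊗ (g + h) ≤ (1 + t) L + (1 + t⁻¹) M` for every `t > 0`; choosing `t` well gives the
triangle inequality for `‖·‖_*`. For the duality, `g ⊗ g ≤ L` means `|⟪g, x⟫|² ≤ ⟪L x, x⟫` for
all `x`, which bounds the left supremum by the right one after rescaling `g`; conversely, by
Cauchy–Schwarz for the positive form `⟪L ·, ·⟫`, the vector `g = ⟪L f, f⟫^{-1/2} L f` satisfies
`g ⊗ g ≤ L` and `|⟪g, f⟫| = ⟪L f, f⟫^{1/2}`.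
-/

noncomputable section
open scoped ENNReal

namespace ConeNorm

variable {H : Type*}

/-- The rank one operator `h ↦ ⟨h,g⟩ g`. -/
def rankOne [NormedAddCommGroup H] [InnerProductSpace ℂ H] (g : H) :
    H →L[ℂ] H :=
  (ContinuousLinearMap.toSpanSingleton ℂ g).comp ((innerSL ℂ) g)

section

open ContinuousLinearMap RCLike
open scoped NNReal

variable [NormedAddCommGroup H] [InnerProductSpace ℂ H]

lemma _root_.ContinuousLinearMap.IsPositive.norm_inner_sq_le {L : H →L[ℂ] H}
    (hL : L.IsPositive) (x y : H) :
    ‖inner ℂ (L x) y‖ ^ 2 ≤ re (inner ℂ (L x) x) * re (inner ℂ (L y) y) := by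
  -- `(x, y) ↦ ⟪L x, y⟫` is a semi-inner product on `H`
  let c : PreInnerProductSpace.Core ℂ H :=
    { inner x y := inner ℂ (L x) y
      conj_inner_symm x y := by rw [inner_conj_symm, hL.inner_left_eq_inner_right]
      re_inner_nonneg := hL.re_inner_nonneg_left
      add_left x y z := by rw [map_add, inner_add_left]
      smul_left x y r := by rw [map_smul, inner_smul_left] }
  rw [sq]
  nth_rw 2 [hL.inner_left_eq_inner_right, ← norm_inner_symm]
  exact InnerProductSpace.Core.inner_mul_inner_self_le (c := c) x y

lemma _root_.ContinuousLinearMap.re_inner_ofReal_smul_apply_self (c : ℝ) (L : H →L[ℂ] H)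
    (x : H) : re (inner ℂ (((c : ℂ) • L) x) x) = c * re (inner ℂ (L x) x) := by
  rw [smul_apply, inner_smul_left, Complex.conj_ofReal]
  exact Complex.re_ofReal_mul c _

lemma _root_.ContinuousLinearMap.IsPositive.ofReal_smul {L : H →L[ℂ] H} (hL : L.IsPositive)
    {c : ℝ} (hc : 0 ≤ c) : ((c : ℂ) • L).IsPositive :=
  hL.smul_of_nonneg (Complex.zero_le_real.2 hc)

lemma rankOne_apply (g x : H) : rankOne g x = inner ℂ g x • g := rfl

lemma re_inner_rankOne_apply_self (g x : H) :
    re (inner ℂ (rankOne g x) x) = ‖inner ℂ g x‖ ^ 2 := by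
  rw [rankOne_apply, inner_smul_left, RCLike.conj_mul, ← ofReal_pow, ofReal_re]

lemma isPositive_rankOne (g : H) : (rankOne g).IsPositive :=
  InnerProductSpace.isPositive_rankOne_self g

lemma isPositive_of_rankOne_le {g : H} {L : H →L[ℂ] H} (h : rankOne g ≤ L) : L.IsPositive := by
  simpa using h.add (isPositive_rankOne g)

lemma norm_inner_sq_le_of_rankOne_le {g : H} {L : H →L[ℂ] H} (h : rankOne g ≤ L) (x : H) :
    ‖inner ℂ g x‖ ^ 2 ≤ re (inner ℂ (L x) x) := by
  have := h.re_inner_nonneg_left x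
  rw [sub_apply, inner_sub_left, map_sub, re_inner_rankOne_apply_self] at this
  linarith

lemma rankOne_le_iff {g : H} {L : H →L[ℂ] H} (hL : L.IsPositive) :
    rankOne g ≤ L ↔ ∀ x, ‖inner ℂ g x‖ ^ 2 ≤ re (inner ℂ (L x) x) := by
  refine ⟨norm_inner_sq_le_of_rankOne_le, fun h ↦ ?_⟩
  refine ⟨hL.isSymmetric.sub (isPositive_rankOne g).isSymmetric, fun x ↦ ?_⟩
  rw [reApplyInnerSelf_apply, sub_apply, inner_sub_left, map_sub, re_inner_rankOne_apply_self]
  linarith [h x]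

lemma rankOne_le_norm_sq_smul_one (g : H) : rankOne g ≤ ((‖g‖ ^ 2 : ℝ) : ℂ) • 1 := by
  rw [rankOne_le_iff (isPositive_one.ofReal_smul (sq_nonneg _))]
  intro x
  rw [re_inner_ofReal_smul_apply_self, one_apply_eq_self, inner_self_eq_norm_sq, ← mul_pow]
  exact pow_le_pow_left₀ (norm_nonneg _) (norm_inner_le_norm g x) 2

lemma rankOne_smul_le {g : H} {L : H →L[ℂ] H} (h : rankOne g ≤ L) (c : ℂ) :
    rankOne (c • g) ≤ ((‖c‖ ^ 2 : ℝ) : ℂ) • L := by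
  rw [rankOne_le_iff ((isPositive_of_rankOne_le h).ofReal_smul (sq_nonneg _))]
  intro x
  rw [re_inner_ofReal_smul_apply_self, inner_smul_left, norm_mul, norm_conj, mul_pow]
  exact mul_le_mul_of_nonneg_left (norm_inner_sq_le_of_rankOne_le h x) (sq_nonneg _)

lemma add_sq_le_one_add_mul_sq {p q t : ℝ} (ht : 0 < t) :
    (p + q) ^ 2 ≤ (1 + t) * p ^ 2 + (1 + t⁻¹) * q ^ 2 := by
  have h : (1 + t) * p ^ 2 + (1 + t⁻¹) * q ^ 2 - (p + q) ^ 2 = t⁻¹ * (t * p - q) ^ 2 := by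
    field_simp
    ring
  exact sub_nonneg.1 (h ▸ by positivity)

lemma rankOne_add_le {g h : H} {L₁ L₂ : H →L[ℂ] H} (hg : rankOne g ≤ L₁) (hh : rankOne h ≤ L₂)
    {t : ℝ} (ht : 0 < t) :
    rankOne (g + h) ≤ ((1 + t : ℝ) : ℂ) • L₁ + ((1 + t⁻¹ : ℝ) : ℂ) • L₂ := by
  have hpos : (((1 + t : ℝ) : ℂ) • L₁ + ((1 + t⁻¹ : ℝ) : ℂ) • L₂).IsPositive :=
    ((isPositive_of_rankOne_le hg).ofReal_smul (by positivity)).add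
      ((isPositive_of_rankOne_le hh).ofReal_smul (by positivity))
  rw [rankOne_le_iff hpos]
  intro x
  rw [add_apply, inner_add_left, inner_add_left, map_add, re_inner_ofReal_smul_apply_self,
    re_inner_ofReal_smul_apply_self]
  calc ‖inner ℂ g x + inner ℂ h x‖ ^ 2 ≤ (‖inner ℂ g x‖ + ‖inner ℂ h x‖) ^ 2 :=
        pow_le_pow_left₀ (norm_nonneg _) (norm_add_le _ _) 2
    _ ≤ (1 + t) * ‖inner ℂ g x‖ ^ 2 + (1 + t⁻¹) * ‖inner ℂ h x‖ ^ 2 :=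
        add_sq_le_one_add_mul_sq ht
    _ ≤ _ := by
        gcongr
        exacts [norm_inner_sq_le_of_rankOne_le hg x, norm_inner_sq_le_of_rankOne_le hh x]

lemma rankOne_apply_le_smul {L : H →L[ℂ] H} (hL : L.IsPositive) (f : H) :
    rankOne (L f) ≤ ((re (inner ℂ (L f) f) : ℝ) : ℂ) • L := by
  rw [rankOne_le_iff (hL.ofReal_smul (hL.re_inner_nonneg_left f))]
  intro x
  rw [re_inner_ofReal_smul_apply_self]
  exact hL.norm_inner_sq_le f x

structure IsUnitalCone (𝓛 : Set (H →L[ℂ] H)) : Prop where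
  add_mem {L₁ L₂ : H →L[ℂ] H} : L₁ ∈ 𝓛 → L₂ ∈ 𝓛 → L₁ + L₂ ∈ 𝓛
  ofReal_smul_mem {c : ℝ} {L : H →L[ℂ] H} : 0 ≤ c → L ∈ 𝓛 → (c : ℂ) • L ∈ 𝓛
  one_mem : (1 : H →L[ℂ] H) ∈ 𝓛

def coneNorm (𝓛 : Set (H →L[ℂ] H)) (ξ g : H) : ℝ :=
  sInf {x : ℝ | ∃ L ∈ 𝓛, rankOne g ≤ L ∧ x = √(re (inner ℂ (L ξ) ξ))}

variable {𝓛 : Set (H →L[ℂ] H)} {ξ : H}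

lemma coneNorm_nonneg (g : H) : 0 ≤ coneNorm 𝓛 ξ g :=
  Real.sInf_nonneg (by rintro _ ⟨L, -, -, rfl⟩; positivity)

lemma coneNorm_le {g : H} {L : H →L[ℂ] H} (hL : L ∈ 𝓛) (hgL : rankOne g ≤ L) :
    coneNorm 𝓛 ξ g ≤ √(re (inner ℂ (L ξ) ξ)) :=
  csInf_le ⟨0, by rintro _ ⟨L, -, -, rfl⟩; positivity⟩ ⟨L, hL, hgL, rfl⟩

lemma IsUnitalCone.exists_rankOne_le (h𝓛 : IsUnitalCone 𝓛) (g : H) :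
    ∃ L ∈ 𝓛, rankOne g ≤ L :=
  ⟨_, h𝓛.ofReal_smul_mem (sq_nonneg ‖g‖) h𝓛.one_mem, rankOne_le_norm_sq_smul_one g⟩

lemma IsUnitalCone.le_coneNorm (h𝓛 : IsUnitalCone 𝓛) {g : H} {a : ℝ}
    (h : ∀ L ∈ 𝓛, rankOne g ≤ L → a ≤ √(re (inner ℂ (L ξ) ξ))) : a ≤ coneNorm 𝓛 ξ g := by
  obtain ⟨L, hL, hgL⟩ := h𝓛.exists_rankOne_le g
  refine le_csInf ⟨_, L, hL, hgL, rfl⟩ ?_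
  rintro _ ⟨L, hL, hgL, rfl⟩
  exact h L hL hgL

lemma IsUnitalCone.exists_lt_of_coneNorm_lt (h𝓛 : IsUnitalCone 𝓛) {g : H} {a : ℝ}
    (h : coneNorm 𝓛 ξ g < a) : ∃ L ∈ 𝓛, rankOne g ≤ L ∧ √(re (inner ℂ (L ξ) ξ)) < a := by
  by_contra! h'
  exact h.not_ge (h𝓛.le_coneNorm h')

lemma IsUnitalCone.coneNorm_smul_le (h𝓛 : IsUnitalCone 𝓛) (c : ℂ) (g : H) :
    coneNorm 𝓛 ξ (c • g) ≤ ‖c‖ * coneNorm 𝓛 ξ g := by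
  have key : ∀ L ∈ 𝓛, rankOne g ≤ L → coneNorm 𝓛 ξ (c • g) ≤ ‖c‖ * √(re (inner ℂ (L ξ) ξ)) := by
    intro L hL hgL
    calc coneNorm 𝓛 ξ (c • g) ≤ √(re (inner ℂ ((((‖c‖ ^ 2 : ℝ) : ℂ) • L) ξ) ξ)) :=
          coneNorm_le (h𝓛.ofReal_smul_mem (sq_nonneg _) hL) (rankOne_smul_le hgL c)
      _ = ‖c‖ * √(re (inner ℂ (L ξ) ξ)) := by
          rw [re_inner_ofReal_smul_apply_self, Real.sqrt_mul (sq_nonneg _),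
            Real.sqrt_sq (norm_nonneg c)]
  rcases eq_or_ne c 0 with rfl | hc
  · obtain ⟨L, hL, hgL⟩ := h𝓛.exists_rankOne_le g
    simpa using key L hL hgL
  · have hc : 0 < ‖c‖ := norm_pos_iff.2 hc
    rw [← div_le_iff₀' hc]
    exact h𝓛.le_coneNorm fun L hL hgL ↦ (div_le_iff₀' hc).2 (key L hL hgL)

lemma exists_pos_one_add_mul_sq_le {a b ε : ℝ} (ha : 0 ≤ a) (hb : 0 ≤ b) (hε : 0 < ε) :
    ∃ t > 0, (1 + t) * a ^ 2 + (1 + t⁻¹) * b ^ 2 ≤ (a + b + ε) ^ 2 := by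
  have ha' : 0 < a + ε / 2 := by positivity
  have hb' : 0 < b + ε / 2 := by positivity
  -- `(1 + t) a² + (1 + t⁻¹) b²` is minimal, with value `(a + b)²`, at `t = b / a`
  refine ⟨(b + ε / 2) / (a + ε / 2), by positivity, ?_⟩
  calc (1 + (b + ε / 2) / (a + ε / 2)) * a ^ 2 + (1 + ((b + ε / 2) / (a + ε / 2))⁻¹) * b ^ 2
      ≤ (1 + (b + ε / 2) / (a + ε / 2)) * (a + ε / 2) ^ 2
        + (1 + ((b + ε / 2) / (a + ε / 2))⁻¹) * (b + ε / 2) ^ 2 := by gcongr <;> linarith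
    _ = (a + b + ε) ^ 2 := by field_simp; ring

lemma IsUnitalCone.coneNorm_add_le_sqrt_add_sqrt (h𝓛 : IsUnitalCone 𝓛) {g h : H}
    {L₁ L₂ : H →L[ℂ] H} (hL₁ : L₁ ∈ 𝓛) (hgL₁ : rankOne g ≤ L₁) (hL₂ : L₂ ∈ 𝓛)
    (hhL₂ : rankOne h ≤ L₂) :
    coneNorm 𝓛 ξ (g + h) ≤ √(re (inner ℂ (L₁ ξ) ξ)) + √(re (inner ℂ (L₂ ξ) ξ)) := by
  set a := √(re (inner ℂ (L₁ ξ) ξ))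
  set b := √(re (inner ℂ (L₂ ξ) ξ))
  refine le_of_forall_pos_le_add fun ε hε ↦ ?_
  obtain ⟨t, ht, hle⟩ := exists_pos_one_add_mul_sq_le (Real.sqrt_nonneg _) (Real.sqrt_nonneg _) hε
  have hL : ((1 + t : ℝ) : ℂ) • L₁ + ((1 + t⁻¹ : ℝ) : ℂ) • L₂ ∈ 𝓛 :=
    h𝓛.add_mem (h𝓛.ofReal_smul_mem (by positivity) hL₁) (h𝓛.ofReal_smul_mem (by positivity) hL₂)
  calc coneNorm 𝓛 ξ (g + h)
      ≤ √(re (inner ℂ ((((1 + t : ℝ) : ℂ) • L₁ + ((1 + t⁻¹ : ℝ) : ℂ) • L₂) ξ) ξ)) :=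
        coneNorm_le hL (rankOne_add_le hgL₁ hhL₂ ht)
    _ = √((1 + t) * a ^ 2 + (1 + t⁻¹) * b ^ 2) := by
        rw [add_apply, inner_add_left, map_add, re_inner_ofReal_smul_apply_self,
          re_inner_ofReal_smul_apply_self,
          Real.sq_sqrt ((isPositive_of_rankOne_le hgL₁).re_inner_nonneg_left ξ),
          Real.sq_sqrt ((isPositive_of_rankOne_le hhL₂).re_inner_nonneg_left ξ)]
    _ ≤ √((a + b + ε) ^ 2) := Real.sqrt_le_sqrt hle
    _ = a + b + ε := Real.sqrt_sq (by positivity)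

lemma IsUnitalCone.coneNorm_add_le (h𝓛 : IsUnitalCone 𝓛) (g h : H) :
    coneNorm 𝓛 ξ (g + h) ≤ coneNorm 𝓛 ξ g + coneNorm 𝓛 ξ h := by
  have : coneNorm 𝓛 ξ (g + h) - coneNorm 𝓛 ξ h ≤ coneNorm 𝓛 ξ g :=
    h𝓛.le_coneNorm fun L₁ hL₁ hgL₁ ↦ sub_le_comm.1 <| h𝓛.le_coneNorm fun L₂ hL₂ hhL₂ ↦
      sub_le_iff_le_add'.2 (h𝓛.coneNorm_add_le_sqrt_add_sqrt hL₁ hgL₁ hL₂ hhL₂)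
  linarith

def IsUnitalCone.coneSeminorm (h𝓛 : IsUnitalCone 𝓛) (ξ : H) : Seminorm ℂ H :=
  .ofSMulLE (coneNorm 𝓛 ξ)
    (le_antisymm (by simpa using h𝓛.coneNorm_smul_le (0 : ℂ) 0) (coneNorm_nonneg 0))
    h𝓛.coneNorm_add_le h𝓛.coneNorm_smul_le

lemma IsUnitalCone.ofReal_norm_inner_le_iSup (h𝓛 : IsUnitalCone 𝓛) {g : H}
    (hg : coneNorm 𝓛 ξ g < 1) (f : H) :
    ENNReal.ofReal ‖inner ℂ g f‖ ≤ ⨆ (L : H →L[ℂ] H) (_ : L ∈ 𝓛)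
      (_ : re (inner ℂ (L ξ) ξ) ≤ 1), ENNReal.ofReal √(re (inner ℂ (L f) f)) := by
  obtain ⟨L, hL, hgL, hlt⟩ := h𝓛.exists_lt_of_coneNorm_lt hg
  have hξ : re (inner ℂ (L ξ) ξ) ≤ 1 := by
    simpa using ((Real.sqrt_lt' one_pos).1 hlt).le
  refine le_iSup₂_of_le L hL (le_iSup_of_le hξ (ENNReal.ofReal_le_ofReal ?_))
  exact Real.le_sqrt_of_sq_le (norm_inner_sq_le_of_rankOne_le hgL f)

lemma IsUnitalCone.iSup_norm_inner_le_iSup_sqrt (h𝓛 : IsUnitalCone 𝓛) (f : H) :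
    ⨆ (g : H) (_ : coneNorm 𝓛 ξ g ≤ 1), ENNReal.ofReal ‖inner ℂ g f‖ ≤
      ⨆ (L : H →L[ℂ] H) (_ : L ∈ 𝓛) (_ : re (inner ℂ (L ξ) ξ) ≤ 1),
        ENNReal.ofReal √(re (inner ℂ (L f) f)) := by
  refine iSup₂_le fun g hg ↦ ENNReal.le_of_forall_lt_one_mul_le fun a ha ↦ ?_
  lift a to ℝ≥0 using ha.ne_top
  have ha : (a : ℝ) < 1 := by exact_mod_cast ha
  have hag : coneNorm 𝓛 ξ ((a : ℂ) • g) < 1 := by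
    calc coneNorm 𝓛 ξ ((a : ℂ) • g) ≤ a * coneNorm 𝓛 ξ g := by
          simpa using h𝓛.coneNorm_smul_le (a : ℂ) g
      _ ≤ a * 1 := by gcongr
      _ < 1 := by simpa using ha
  calc (a : ℝ≥0∞) * ENNReal.ofReal ‖inner ℂ g f‖ = ENNReal.ofReal ‖inner ℂ ((a : ℂ) • g) f‖ := by
        rw [inner_smul_left, norm_mul, norm_conj, ENNReal.ofReal_mul (norm_nonneg _)]
        simp
    _ ≤ _ := h𝓛.ofReal_norm_inner_le_iSup hag f

lemma iSup_sqrt_le_iSup_norm_inner (hpos : ∀ L ∈ 𝓛, L.IsPositive) (f : H) :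
    ⨆ (L : H →L[ℂ] H) (_ : L ∈ 𝓛) (_ : re (inner ℂ (L ξ) ξ) ≤ 1),
        ENNReal.ofReal √(re (inner ℂ (L f) f)) ≤
      ⨆ (g : H) (_ : coneNorm 𝓛 ξ g ≤ 1), ENNReal.ofReal ‖inner ℂ g f‖ := by
  refine iSup₂_le fun L hL ↦ iSup_le fun hξ ↦ ?_
  set c := re (inner ℂ (L f) f)
  rcases ((hpos L hL).re_inner_nonneg_left f).eq_or_lt with hc | hc
  · simp [c, ← hc]
  set g : H := (((√c)⁻¹ : ℝ) : ℂ) • L f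
  have hgL : rankOne g ≤ L := by
    have key : ‖(((√c)⁻¹ : ℝ) : ℂ)‖ ^ 2 * c = 1 := by
      rw [Complex.norm_real, Real.norm_eq_abs, sq_abs, inv_pow, Real.sq_sqrt hc.le,
        inv_mul_cancel₀ hc.ne']
    refine (rankOne_smul_le (rankOne_apply_le_smul (hpos L hL) f) _).trans_eq ?_
    rw [smul_smul, ← Complex.ofReal_mul, key, Complex.ofReal_one, one_smul]
  have hg : coneNorm 𝓛 ξ g ≤ 1 := (coneNorm_le hL hgL).trans (Real.sqrt_le_one.2 hξ)
  have hgf : ‖inner ℂ g f‖ = √c := by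
    have hcf : (c : ℂ) = inner ℂ (L f) f := (hpos L hL).isSymmetric.coe_re_inner_apply_self f
    rw [inner_smul_left, Complex.conj_ofReal, ← hcf, ← Complex.ofReal_mul,
      Complex.norm_of_nonneg (by positivity), ← div_eq_inv_mul, Real.div_sqrt]
  exact le_iSup₂_of_le g hg (congrArg ENNReal.ofReal hgf).ge

end

theorem cone_seminorm_and_duality_general
    [NormedAddCommGroup H] [InnerProductSpace ℂ H]
    (𝓛 : Set (H →L[ℂ] H))
    (hpos : ∀ L ∈ 𝓛, L.IsPositive)
    (hadd : ∀ L₁ ∈ 𝓛, ∀ L₂ ∈ 𝓛, L₁ + L₂ ∈ 𝓛)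
    (hsmul : ∀ c : ℝ, 0 ≤ c → ∀ L ∈ 𝓛, (c : ℂ) • L ∈ 𝓛)
    (hone : (1 : H →L[ℂ] H) ∈ 𝓛)
    (ξ : H)
    (ns : H → ℝ)
    (hns : ∀ g : H, ns g =
      sInf {x : ℝ | ∃ L ∈ 𝓛, (L - rankOne g).IsPositive ∧
        x = Real.sqrt ((inner ℂ (L ξ) ξ : ℂ).re)}) :
    -- (a) ‖·‖_* is a seminorm
    ((∀ g : H, 0 ≤ ns g) ∧
     (∀ (c : ℂ) (g : H), ns (c • g) = ‖c‖ * ns g) ∧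
     (∀ g h : H, ns (g + h) ≤ ns g + ns h)) ∧
    -- (b) the duality formula
    (∀ f : H,
      (⨆ (g : H) (_ : ns g ≤ 1), ENNReal.ofReal ‖(inner ℂ g f : ℂ)‖) =
        ⨆ (L : H →L[ℂ] H) (_ : L ∈ 𝓛) (_ : (inner ℂ (L ξ) ξ : ℂ).re ≤ 1),
          ENNReal.ofReal (Real.sqrt ((inner ℂ (L f) f : ℂ).re))) := by
  have h𝓛 : IsUnitalCone 𝓛 := ⟨(hadd _ · _), (hsmul _ · _), hone⟩
  obtain rfl : ns = coneNorm 𝓛 ξ := funext hns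
  let p := h𝓛.coneSeminorm ξ
  exact ⟨⟨apply_nonneg p, map_smul_eq_mul p, map_add_le_add p⟩,
    fun f ↦ (h𝓛.iSup_norm_inner_le_iSup_sqrt f).antisymm (iSup_sqrt_le_iSup_norm_inner hpos f)⟩

/-- Lemma 5.1: for a convex cone `𝓛` of positive operators containing the identity
and a vector `ξ`, the function `‖g‖_* = inf {⟨Lξ,ξ⟩^{1/2} : L ∈ 𝓛, L ≥ g ⊗ g}` is
a seminorm, and the two suprema in (b) agree (in `ℝ≥0∞`, both being allowed to
be infinite). -/
theorem cone_seminorm_and_duality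
    [NormedAddCommGroup H] [InnerProductSpace ℂ H] [CompleteSpace H]
    (𝓛 : Set (H →L[ℂ] H))
    (hpos : ∀ L ∈ 𝓛, L.IsPositive)
    (hadd : ∀ L₁ ∈ 𝓛, ∀ L₂ ∈ 𝓛, L₁ + L₂ ∈ 𝓛)
    (hsmul : ∀ c : ℝ, 0 ≤ c → ∀ L ∈ 𝓛, (c : ℂ) • L ∈ 𝓛)
    (hone : (1 : H →L[ℂ] H) ∈ 𝓛)
    (ξ : H)
    (ns : H → ℝ)
    (hns : ∀ g : H, ns g =
      sInf {x : ℝ | ∃ L ∈ 𝓛, (L - rankOne g).IsPositive ∧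
        x = Real.sqrt ((inner ℂ (L ξ) ξ : ℂ).re)}) :
    -- (a) ‖·‖_* is a seminorm
    ((∀ g : H, 0 ≤ ns g) ∧
     (∀ (c : ℂ) (g : H), ns (c • g) = ‖c‖ * ns g) ∧
     (∀ g h : H, ns (g + h) ≤ ns g + ns h)) ∧
    -- (b) the duality formula
    (∀ f : H,
      (⨆ (g : H) (_ : ns g ≤ 1), ENNReal.ofReal ‖(inner ℂ g f : ℂ)‖) =
        ⨆ (L : H →L[ℂ] H) (_ : L ∈ 𝓛) (_ : (inner ℂ (L ξ) ξ : ℂ).re ≤ 1),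
          ENNReal.ofReal (Real.sqrt ((inner ℂ (L f) f : ℂ).re))) :=
  cone_seminorm_and_duality_general 𝓛 hpos hadd hsmul hone ξ ns hns
end ConeNorm
end
end

section
/- Let d ∈ ℕ, d ≥ 1, let A_d = {(t₁,…,t_d) ∈ [0,1]^d : ∑_j t_j = 1} and B_d = {(s₁,…,s_d) ∈ [0,1]^d : ∑_j s_j = 1/2}. There exists a finite subset F_d ⊆ B_d with |F_d| ≤ binomial(2d−2, d−1) such that for each t ∈ A_d there exists s ∈ F_d with s_j ≤ t_j for all j = 1,…,d. -/
lemma exists_le_sum_eq {d : ℕ} (k : ℕ) (b : Fin d → ℕ) (hk : k ≤ ∑ j, b j) :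
    ∃ a : Fin d → ℕ, (∀ j, a j ≤ b j) ∧ ∑ j, a j = k := by
  induction k with
  | zero => exact ⟨0, fun j => Nat.zero_le _, by simp⟩
  | succ k ih =>
    obtain ⟨a, ha, hsum⟩ := ih (Nat.le_of_succ_le hk)
    have hlt : ∑ j, a j < ∑ j, b j := by omega
    obtain ⟨j, hj⟩ : ∃ j, a j < b j := by
      by_contra h
      push_neg at h
      exact absurd (Finset.sum_le_sum fun j _ => h j) (not_le.2 hlt)
    refine ⟨Function.update a j (a j + 1), ?_, ?_⟩
    · intro i
      rcases eq_or_ne i j with rfl | h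
      · simpa using hj
      · rw [Function.update_of_ne h]; exact ha i
    · rw [Finset.sum_update_of_mem (Finset.mem_univ j), Finset.sdiff_singleton_eq_erase]
      rw [← Finset.add_sum_erase _ a (Finset.mem_univ j)] at hsum
      omega

/-- Lemma 6.4: the simplex `A_d = {t ∈ [0,1]^d : ∑ t_j = 1}` can be covered from
below by at most `binom(2d-2, d-1)` elements of
`B_d = {s ∈ [0,1]^d : ∑ s_j = 1/2}`. -/
theorem simplex_covering (d : ℕ) (hd : 1 ≤ d) :
    ∃ F : Finset (Fin d → ℝ),
      (∀ s ∈ F, (∀ j, s j ∈ Set.Icc (0 : ℝ) 1) ∧ ∑ j, s j = 1 / 2) ∧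
      F.card ≤ Nat.choose (2 * d - 2) (d - 1) ∧
      ∀ t : Fin d → ℝ, (∀ j, t j ∈ Set.Icc (0 : ℝ) 1) → ∑ j, t j = 1 →
        ∃ s ∈ F, ∀ j, s j ≤ t j := by
  rcases eq_or_lt_of_le hd with h1 | h2
  · -- d = 1
    subst h1
    refine ⟨{fun _ => (1 : ℝ) / 2}, ?_, ?_, ?_⟩
    · intro s hs
      simp only [Finset.mem_singleton] at hs
      subst hs
      constructor
      · intro j; constructor <;> norm_num
      · simp
    · simp
    · intro t ht hsum
      refine ⟨fun _ => (1 : ℝ) / 2, Finset.mem_singleton_self _, fun j => ?_⟩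
      have : t j = 1 := by
        have : j = 0 := Subsingleton.elim j 0
        subst this
        simpa using hsum
      rw [this]; norm_num
  · -- d ≥ 2
    set n : ℕ := 2 * d - 2 with hn
    have hnpos : 0 < n := by omega
    refine ⟨(Finset.Nat.antidiagonalTuple d (d - 1)).image
        (fun a j => (a j : ℝ) / n), ?_, ?_, ?_⟩
    · intro s hs
      simp only [Finset.mem_image] at hs
      obtain ⟨a, ha, rfl⟩ := hs
      rw [Finset.Nat.mem_antidiagonalTuple] at ha
      have haj : ∀ j, a j ≤ d - 1 := fun j => ha ▸ Finset.single_le_sum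
        (fun i _ => Nat.zero_le (a i)) (Finset.mem_univ j)
      constructor
      · intro j
        constructor
        · positivity
        · rw [div_le_one (by exact_mod_cast hnpos)]
          have : a j ≤ n := le_trans (haj j) (by omega)
          exact_mod_cast this
      · rw [← Finset.sum_div]
        have : (∑ j, (a j : ℝ)) = (d - 1 : ℕ) := by exact_mod_cast ha
        rw [this]
        have hd1 : ((d - 1 : ℕ) : ℝ) = (d : ℝ) - 1 := by
          push_cast [Nat.cast_sub hd]; ring
        have hnr : ((n : ℕ) : ℝ) = 2 * ((d : ℝ) - 1) := by
          rw [hn]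
          push_cast [Nat.cast_sub (by omega : 2 ≤ 2 * d)]
          ring
        rw [hd1, hnr]
        have : (d : ℝ) - 1 ≠ 0 := by
          have : (2 : ℝ) ≤ d := by exact_mod_cast h2
          linarith
        field_simp
    · calc ((Finset.Nat.antidiagonalTuple d (d - 1)).image _).card
          ≤ (Finset.Nat.antidiagonalTuple d (d - 1)).card := Finset.card_image_le
        _ = (Finset.piAntidiag Finset.univ (d - 1)).card := by
            rw [Finset.piAntidiag_univ_fin_eq_antidiagonalTuple]
        _ = ((Finset.univ : Finset (Fin d)).sym (d - 1)).card := by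
            rw [← Finset.map_sym_eq_piAntidiag, Finset.card_map]
        _ ≤ Fintype.card (Sym (Fin d) (d - 1)) := Finset.card_le_univ _
        _ = (Fintype.card (Fin d) + (d - 1) - 1).choose (d - 1) := Sym.card_sym_eq_choose _
        _ = (2 * d - 2).choose (d - 1) := by rw [Fintype.card_fin]; congr 1; omega
    · intro t ht hsum
      set b : Fin d → ℕ := fun j => ⌊(n : ℝ) * t j⌋₊ with hb
      have hsumb : d - 1 ≤ ∑ j, b j := by
        have h1 : ∀ j, (n : ℝ) * t j < b j + 1 := fun j => Nat.lt_floor_add_one _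
        have h2' : (n : ℝ) * 1 < (∑ j, (b j : ℝ)) + d := by
          calc (n : ℝ) * 1 = ∑ j, (n : ℝ) * t j := by
                rw [← Finset.mul_sum, hsum]
            _ < ∑ j, ((b j : ℝ) + 1) := Finset.sum_lt_sum_of_nonempty
                (by simp [Finset.univ_nonempty_iff]; exact Fin.pos_iff_nonempty.mp (by omega))
                (fun j _ => h1 j)
            _ = (∑ j, (b j : ℝ)) + d := by
                rw [Finset.sum_add_distrib]; simp
        have : (n : ℝ) < ((∑ j, b j : ℕ) : ℝ) + d := by
          push_cast at h2' ⊢; linarith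
        have : n < (∑ j, b j) + d := by exact_mod_cast this
        omega
      obtain ⟨a, haleb, hasum⟩ := exists_le_sum_eq (d - 1) b hsumb
      refine ⟨fun j => (a j : ℝ) / n, ?_, ?_⟩
      · exact Finset.mem_image_of_mem _ (Finset.Nat.mem_antidiagonalTuple.mpr hasum)
      · intro j
        rw [div_le_iff₀ (by exact_mod_cast hnpos)]
        calc (a j : ℝ) ≤ (b j : ℝ) := by exact_mod_cast haleb j
          _ ≤ (n : ℝ) * t j := Nat.floor_le (by
              have := (ht j).1
              positivity)
          _ = t j * n := by ring
end

section
/- Let d ∈ ℕ, d ≥ 1. There exists a constant C_d ≤ binomial(2d−2, d−1) such that for all n ∈ ℕ there exists a subset G of {β ∈ ℕ^d : |β| ≥ n/2} with |G| ≤ C_d such that for each multi-index α ∈ ℕ^d with |α| = n there exists β ∈ G with β ≤ α componentwise. -/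
/-!
Every multi-index `α` of length `n` is rounded to the grid `(n / e) ℕ^d`: the coordinates
`t_j = ⌊α_j e / n⌋` lose less than one each, so `|t| > e - d`. When `e + 1 ≥ s + d`, some
`k ≤ t` has `|k| = s`, and then `⌈k_j n / e⌉ ≤ α_j`. The points `⌈k n / e⌉` with `|k| = s`
have length at least `s n / e` and number at most `binom(s + d - 1, s)`; take `s = d - 1`,
`e = 2s` (and `s = 1` when `d = 1`).
-/

open Finset

namespace Finset

variable {ι : Type*} [Fintype ι] [DecidableEq ι]

lemma card_piAntidiag_univ (s : ℕ) :
    #(piAntidiag (univ : Finset ι) s) = (Fintype.card ι + s - 1).choose s := by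
  rw [← map_sym_eq_piAntidiag, card_map, sym_univ, card_univ, Sym.card_sym_eq_choose]

lemma exists_le_sum_eq_of_le_sum {t : ι → ℕ} {m : ℕ} (h : m ≤ ∑ i, t i) :
    ∃ k ≤ t, ∑ i, k i = m := by
  induction m with
  | zero => exact ⟨0, fun _ => Nat.zero_le _, by simp⟩
  | succ m ih =>
    obtain ⟨k, hkt, hk⟩ := ih (by omega)
    obtain ⟨i, -, hi⟩ := exists_lt_of_sum_lt (s := univ) (f := k) (g := t) (by omega)
    refine ⟨k + Pi.single i 1, fun j => ?_, ?_⟩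
    · rcases eq_or_ne j i with rfl | hji
      · simpa using hi
      · simpa [hji] using hkt j
    · simp [sum_add_distrib, hk]

end Finset

section CoveringGrid

variable {ι : Type*} [Fintype ι]

lemma lt_sum_mul_div_add_card {α : ι → ℕ} {n : ℕ} (hn : 0 < n) (hα : ∑ i, α i = n) (e : ℕ) :
    e < ∑ i, α i * e / n + Fintype.card ι := by
  have hfloor : ∀ i, α i * e < n * (α i * e / n + 1) := fun i => Nat.lt_mul_div_succ _ hn
  have : n * e < n * (∑ i, α i * e / n + Fintype.card ι) := by
    calc n * e = ∑ i, α i * e := by rw [← sum_mul, hα]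
      _ < ∑ i, n * (α i * e / n + 1) := sum_lt_sum_of_nonempty
        (nonempty_of_sum_ne_zero (hα ▸ hn.ne')) fun i _ => hfloor i
      _ = n * (∑ i, α i * e / n + Fintype.card ι) := by
        rw [← mul_sum, sum_add_distrib, sum_const, card_univ, smul_eq_mul, mul_one]
  exact Nat.lt_of_mul_lt_mul_left this

variable [DecidableEq ι]

lemma exists_mem_piAntidiag_mul_le [Nonempty ι] {s e n : ℕ} {α : ι → ℕ}
    (h : s + Fintype.card ι ≤ e + 1) (hα : ∑ i, α i = n) :
    ∃ k ∈ piAntidiag univ s, ∀ j, k j * n ≤ α j * e := by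
  obtain ⟨t, hst, htα⟩ : ∃ t : ι → ℕ, s ≤ ∑ i, t i ∧ ∀ j, t j * n ≤ α j * e := by
    rcases Nat.eq_zero_or_pos n with rfl | hn
    · obtain ⟨i⟩ := ‹Nonempty ι›
      exact ⟨Pi.single i s, by simp, by simp⟩
    · have := lt_sum_mul_div_add_card hn hα e
      exact ⟨fun i => α i * e / n, by simp only; omega, fun j => Nat.div_mul_le_self _ _⟩
  obtain ⟨k, hkt, hk⟩ := exists_le_sum_eq_of_le_sum hst
  exact ⟨k, by simpa [mem_piAntidiag] using hk,
    fun j => (Nat.mul_le_mul_right n (hkt j)).trans (htα j)⟩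

def coveringGrid (s e n : ℕ) : Finset (ι → ℕ) :=
  (piAntidiag univ s).image fun k j => (k j * n) ⌈/⌉ e

lemma card_coveringGrid_le (s e n : ℕ) :
    #(coveringGrid s e n : Finset (ι → ℕ)) ≤ (Fintype.card ι + s - 1).choose s :=
  card_image_le.trans_eq (card_piAntidiag_univ s)

lemma mul_le_mul_sum_of_mem_coveringGrid {s e n : ℕ} (he : 0 < e) {β : ι → ℕ}
    (hβ : β ∈ coveringGrid s e n) : s * n ≤ e * ∑ i, β i := by
  obtain ⟨k, hk, rfl⟩ := mem_image.mp hβ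
  calc s * n = ∑ i, k i * n := by rw [← sum_mul, (mem_piAntidiag.mp hk).1]
    _ ≤ ∑ i, e * ((k i * n) ⌈/⌉ e) := sum_le_sum fun i _ => le_smul_ceilDiv he
    _ = e * ∑ i, (k i * n) ⌈/⌉ e := (mul_sum ..).symm

lemma exists_mem_coveringGrid_le [Nonempty ι] {s e n : ℕ} (he : 0 < e)
    (h : s + Fintype.card ι ≤ e + 1) {α : ι → ℕ} (hα : ∑ i, α i = n) :
    ∃ β ∈ coveringGrid s e n, β ≤ α := by
  obtain ⟨k, hk, hkα⟩ := exists_mem_piAntidiag_mul_le h hα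
  exact ⟨_, mem_image_of_mem _ hk,
    fun j => (ceilDiv_le_iff_le_smul he).2 (by simpa [mul_comm] using hkα j)⟩

end CoveringGrid

/-- Lemma 6.6: a discrete covering lemma.  There is `C_d ≤ binom(2d-2, d-1)` such
that for every `n` there is a set `G` of multi-indices of length `≥ n/2`, of
cardinality at most `C_d`, such that every multi-index of length `n` dominates
some element of `G` componentwise. -/
theorem multiindex_covering (d : ℕ) (hd : 1 ≤ d) :
    ∃ C : ℕ, C ≤ Nat.choose (2 * d - 2) (d - 1) ∧
      ∀ n : ℕ, ∃ G : Finset (Fin d → ℕ),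
        (∀ β ∈ G, (n : ℝ) / 2 ≤ (∑ i, β i : ℕ)) ∧
        G.card ≤ C ∧
        ∀ α : Fin d → ℕ, (∑ i, α i) = n → ∃ β ∈ G, ∀ j, β j ≤ α j := by
  have : Nonempty (Fin d) := ⟨⟨0, hd⟩⟩
  set s := max (d - 1) 1 with hs
  refine ⟨(d + s - 1).choose s, ?_, fun n => ⟨coveringGrid s (2 * s) n, fun β hβ => ?_,
    (card_coveringGrid_le s _ n).trans_eq (by rw [Fintype.card_fin]),
    fun α hα => exists_mem_coveringGrid_le (by omega) (by rw [Fintype.card_fin]; omega) hα⟩⟩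
  · rcases hd.eq_or_lt with rfl | _
    · simp [hs]
    · rw [show s = d - 1 by omega, show d + (d - 1) - 1 = 2 * d - 2 by omega]
  · have hn : n ≤ 2 * ∑ i, β i := Nat.le_of_mul_le_mul_left
      ((mul_le_mul_sum_of_mem_coveringGrid (by omega) hβ).trans_eq (by ring)) (by omega : 0 < s)
    rw [div_le_iff₀ two_pos]
    exact_mod_cast (by omega : n ≤ (∑ i, β i) * 2)
end
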